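/- arXiv:0905.4391 — 8 statements merged into one kernel-verified Lean document; each statement's English description precedes it below -/
import Mathlib

section
/- Let n and k be natural numbers with k ≤ n, and let A, B, P : ℝ → Matrix (Fin n) (Fin n) ℝ be differentiable matrix-valued functions of a real parameter t such that for every t: B(t) and A(t) are symmetric, P(t) is symmetric and idempotent (P(t)² = P(t)), A(t)·B(t) = I − P(t), B(t)·A(t) = I − P(t), and A(t)·P(t) = 0 (so that A(t) is the Moore–Penrose pseudoinverse of B(t) and P(t) is the orthogonal projection onto the null space of B(t)). Then the derivative of A satisfies A′(t) = −(P′(t) + A(t)·B′(t))·A(t) − A(t)·P′(t) for every t. -/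
/-!
Differentiating the identities `A B = 1 - P` and `A P = 0` expresses `A' B` and `A' P` through
`A`, `B'` and `P'`; since `B A + P = 1`, the derivative `A' = A' B A + A' P` is then determined.
-/

section EntrywiseDeriv

variable {𝕜 : Type*} [NontriviallyNormedField 𝕜] {l m n : Type*}

theorem Matrix.hasDerivAt_mul_apply [Fintype m] {C : 𝕜 → Matrix l m 𝕜} {D : 𝕜 → Matrix m n 𝕜}
    {C' : Matrix l m 𝕜} {D' : Matrix m n 𝕜} {t : 𝕜}
    (hC : ∀ i j, HasDerivAt (fun s => C s i j) (C' i j) t)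
    (hD : ∀ i j, HasDerivAt (fun s => D s i j) (D' i j) t) (i : l) (j : n) :
    HasDerivAt (fun s => (C s * D s) i j) ((C' * D t + C t * D') i j) t := by
  simp only [Matrix.mul_apply, Matrix.add_apply, ← Finset.sum_add_distrib]
  exact HasDerivAt.fun_sum fun k _ => (hC i k).mul (hD k j)

theorem Matrix.hasDerivAt_apply_unique {f : 𝕜 → Matrix m n 𝕜} {F G : Matrix m n 𝕜} {t : 𝕜}
    (hF : ∀ i j, HasDerivAt (fun s => f s i j) (F i j) t)
    (hG : ∀ i j, HasDerivAt (fun s => f s i j) (G i j) t) : F = G :=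
  Matrix.ext fun i j => (hF i j).unique (hG i j)

end EntrywiseDeriv

theorem pseudoinverse_deriv_general (n : ℕ)
    (A B P A' B' P' : ℝ → Matrix (Fin n) (Fin n) ℝ)
    (hA : ∀ t i j, HasDerivAt (fun s => A s i j) (A' t i j) t)
    (hB : ∀ t i j, HasDerivAt (fun s => B s i j) (B' t i j) t)
    (hP : ∀ t i j, HasDerivAt (fun s => P s i j) (P' t i j) t)
    (hAB : ∀ t, A t * B t = 1 - P t)
    (hBA : ∀ t, B t * A t = 1 - P t)
    (hAP : ∀ t, A t * P t = 0) :
    ∀ t, A' t = -(P' t + A t * B' t) * A t - A t * P' t := by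
  intro t
  have hA'B : A' t * B t + A t * B' t = -P' t :=
    Matrix.hasDerivAt_apply_unique (Matrix.hasDerivAt_mul_apply (hA t) (hB t)) fun i j => by
      simpa [hAB, Matrix.sub_apply] using (hP t i j).const_sub ((1 : Matrix (Fin n) (Fin n) ℝ) i j)
  have hA'P : A' t * P t + A t * P' t = 0 :=
    Matrix.hasDerivAt_apply_unique (Matrix.hasDerivAt_mul_apply (hA t) (hP t)) fun i j => by
      simpa [hAP] using hasDerivAt_const t (0 : ℝ)
  calc A' t = A' t * (B t * A t + P t) := by rw [hBA]; noncomm_ring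
    _ = (A' t * B t + A t * B' t) * A t - A t * B' t * A t + (A' t * P t + A t * P' t)
          - A t * P' t := by noncomm_ring
    _ = -(P' t + A t * B' t) * A t - A t * P' t := by rw [hA'B, hA'P]; noncomm_ring

/-- **Differentiation of a matrix pseudoinverse.**
If `A t` is the Moore–Penrose pseudoinverse of the symmetric matrix `B t` and `P t` is the
orthogonal projection onto the null space of `B t` (expressed by the algebraic identities below),
and `A`, `B`, `P` are differentiable (entrywise) with derivatives `A'`, `B'`, `P'`, then
`A' = -(P' + A * B') * A - A * P'`. -/
theorem pseudoinverse_deriv (n k : ℕ) (hk : k ≤ n)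
    (A B P A' B' P' : ℝ → Matrix (Fin n) (Fin n) ℝ)
    (hA : ∀ t i j, HasDerivAt (fun s => A s i j) (A' t i j) t)
    (hB : ∀ t i j, HasDerivAt (fun s => B s i j) (B' t i j) t)
    (hP : ∀ t i j, HasDerivAt (fun s => P s i j) (P' t i j) t)
    (hAsymm : ∀ t, (A t).IsSymm)
    (hBsymm : ∀ t, (B t).IsSymm)
    (hPsymm : ∀ t, (P t).IsSymm)
    (hPidem : ∀ t, P t * P t = P t)
    (hAB : ∀ t, A t * B t = 1 - P t)
    (hBA : ∀ t, B t * A t = 1 - P t)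
    (hAP : ∀ t, A t * P t = 0) :
    ∀ t, A' t = -(P' t + A t * B' t) * A t - A t * P' t :=
  pseudoinverse_deriv_general n A B P A' B' P' hA hB hP hAB hBA hAP
end

section
/- Let G be a finite connected simple graph on n vertices with distinguished vertices v_in ≠ v_out such that the induced subgraph G − v_out is connected. If G is not bipartite, then the affine span H in ℝ^V of the set { tr_ω : ω a proper walk from v_in to v_out } has dimension n − 1. -/
open scoped Classical

noncomputable section

/-- The trace of a walk: the number of occurrences of each vertex along the walk,
viewed as a vector in `ℝ^V`. -/
def trace {V : Type*} [DecidableEq V] {G : SimpleGraph V} {u v : V} (ω : G.Walk u v) : V → ℝ :=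
  fun x => (ω.support.count x : ℝ)

/-- A walk from `vin` to `vout` is proper if it visits `vout` exactly once
(namely as its final vertex). -/
def IsProper {V : Type*} [DecidableEq V] {G : SimpleGraph V} {vin vout : V}
    (ω : G.Walk vin vout) : Prop :=
  ω.support.count vout = 1

/-- The set of traces of proper walks from `vin` to `vout`, as vectors in `ℝ^V`. -/
def traceSet {V : Type*} [DecidableEq V] (G : SimpleGraph V) (vin vout : V) : Set (V → ℝ) :=
  {f | ∃ ω : G.Walk vin vout, IsProper ω ∧ f = trace ω}

/-- `Ψ(G)`: the relative interior (interior with respect to the affine span) of the convex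
hull of the traces of proper walks from `vin` to `vout`. -/
def Psi {V : Type*} [Fintype V] [DecidableEq V] (G : SimpleGraph V) (vin vout : V) :
    Set (V → ℝ) :=
  intrinsicInterior ℝ (convexHull ℝ (traceSet G vin vout))

/-- The matrix `M_β` associated to a graph `G` with distinguished vertices `vin, vout`
and vertex weights `β`. -/
def Mmat {V : Type*} [Fintype V] [DecidableEq V] (G : SimpleGraph V) (vin vout : V)
    (β : V → ℝ) : Matrix V V ℝ :=
  fun v w =>
    if (v = vout ∧ w = vout) ∨ (v = vin ∧ w = vout) then 1
    else if G.Adj v w ∧ v ≠ vout ∧ w ≠ vout then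
      β v / ∑ u ∈ Finset.univ.filter (fun u => G.Adj u w), β u
    else 0

/-- The equation `τ_ρ = r` is solvable on `G`: there is a positive vertex-weight function `β`
with `M_β r = r` and `r(vout) = 1`. -/
def Solvable {V : Type*} [Fintype V] [DecidableEq V] (G : SimpleGraph V) (vin vout : V)
    (r : V → ℝ) : Prop :=
  ∃ β : V → ℝ, (∀ v, 0 < β v) ∧ (Mmat G vin vout β).mulVec r = r ∧ r vout = 1

/-!
Every trace takes the value `1` at `vout`, so the direction of the affine span lies in the
hyperplane `f vout = 0`, of dimension `n - 1`. Conversely, inserting a back-and-forth step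
`x y x` into a proper walk shows that `e_x + e_y` lies in the direction for every edge `xy` of
`G - vout`. Modulo these vectors the trace of a proper walk `ω` is `e_vout`, plus `e_vin` when
`ω` has odd length. If all proper walks had lengths of the same parity, the parities of walks
from `vin` in `G - vout` would 2-colour `G`; so, `G` not being bipartite, `e_vin` lies in the
direction, and connectivity of `G - vout` propagates this to every `e_z` with `z ≠ vout`.
-/

open SimpleGraph

lemma SimpleGraph.Preconnected.exists_walk_notMem_support {V : Type*} {G : SimpleGraph V}
    {vout a b : V} (hconn : (G.induce {x | x ≠ vout}).Preconnected) (ha : a ≠ vout)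
    (hb : b ≠ vout) : ∃ p : G.Walk a b, vout ∉ p.support := by
  obtain ⟨q⟩ := hconn ⟨a, ha⟩ ⟨b, hb⟩
  refine ⟨q.map (Embedding.induce _).toHom, fun h => ?_⟩
  obtain ⟨c, -, hc⟩ := List.mem_map.mp ((Walk.support_map _ _) ▸ h)
  exact c.2 hc

lemma LinearMap.ker_proj_le_of_single_mem {R ι : Type*} [Semiring R] [Fintype ι] [DecidableEq ι]
    {D : Submodule R (ι → R)} {i₀ : ι} (h : ∀ i, i ≠ i₀ → Pi.single i 1 ∈ D) :
    LinearMap.ker (LinearMap.proj i₀ : (ι → R) →ₗ[R] R) ≤ D := by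
  intro f hf
  rw [← Finset.univ_sum_single f]
  refine D.sum_mem fun i _ => ?_
  by_cases hi : i = i₀
  · subst hi
    simp [show f i = 0 from hf]
  · have := D.smul_mem (f i) (h i hi)
    rwa [← Pi.single_smul', smul_eq_mul, mul_one] at this

lemma LinearMap.finrank_ker_proj {K ι : Type*} [DivisionRing K] [Fintype ι] (i₀ : ι) :
    Module.finrank K (LinearMap.ker (LinearMap.proj i₀ : (ι → K) →ₗ[K] K)) =
      Fintype.card ι - 1 := by
  have hrange : LinearMap.range (LinearMap.proj i₀ : (ι → K) →ₗ[K] K) = ⊤ :=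
    LinearMap.range_eq_top.mpr fun c => ⟨fun _ => c, rfl⟩
  have h := LinearMap.finrank_range_add_finrank_ker (LinearMap.proj i₀ : (ι → K) →ₗ[K] K)
  rw [hrange, finrank_top, Module.finrank_self, Module.finrank_fintype_fun_eq_card] at h
  omega

section Trace

variable {V : Type*} [DecidableEq V] {G : SimpleGraph V}

lemma trace_nil (u : V) : trace (Walk.nil : G.Walk u u) = Pi.single u 1 := by
  funext z
  rcases eq_or_ne z u with rfl | hz <;> simp [trace, Ne.symm, *]

lemma trace_cons {u v w : V} (h : G.Adj u v) (p : G.Walk v w) :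
    trace (Walk.cons h p) = Pi.single u 1 + trace p := by
  funext z
  by_cases hz : z = u <;> simp [trace, hz, Ne.symm, add_comm]

lemma trace_append {u v w : V} (p : G.Walk u v) (q : G.Walk v w) :
    trace (p.append q) + Pi.single v 1 = trace p + trace q := by
  induction p with
  | nil => simp [trace_nil, add_comm]
  | cons h p ih => rw [Walk.cons_append, trace_cons, trace_cons, add_assoc, ih, add_assoc]

lemma trace_concat {u v w : V} (p : G.Walk u v) (h : G.Adj v w) :
    trace (p.concat h) = trace p + Pi.single w 1 := by
  have := trace_append p (Walk.cons h Walk.nil)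
  rw [← Walk.concat_eq_append, trace_cons, trace_nil] at this
  linear_combination this

lemma trace_append_cons_cons {u x y v : V} (p : G.Walk u x) (h : G.Adj x y) (q : G.Walk x v) :
    trace (p.append (Walk.cons h (Walk.cons h.symm q))) =
      trace (p.append q) + Pi.single x 1 + Pi.single y 1 := by
  have h₁ := trace_append p (Walk.cons h (Walk.cons h.symm q))
  have h₂ := trace_append p q
  rw [trace_cons, trace_cons] at h₁
  linear_combination h₁ - h₂

lemma IsProper.trace_vout_eq_one {vin vout : V} {ω : G.Walk vin vout} (hω : IsProper ω) :
    trace ω vout = 1 := by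
  simp [trace, show ω.support.count vout = 1 from hω]

lemma isProper_cons_iff {u x vout : V} (hu : u ≠ vout) (h : G.Adj u x) (q : G.Walk x vout) :
    IsProper (Walk.cons h q) ↔ IsProper q := by
  simp [IsProper, hu]

lemma isProper_append_iff {u x vout : V} {p : G.Walk u x} (hp : vout ∉ p.support)
    (q : G.Walk x vout) : IsProper (p.append q) ↔ IsProper q := by
  have hp' : vout ∉ p.support.dropLast := fun h => hp (List.dropLast_subset _ h)
  simp [IsProper, Walk.support_append_eq_support_dropLast_append, List.count_append,
    List.count_eq_zero.mpr hp']

lemma isProper_concat {u x vout : V} {p : G.Walk u x} (hp : vout ∉ p.support)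
    (h : G.Adj x vout) : IsProper (p.concat h) := by
  simp [IsProper, Walk.support_concat, List.count_eq_zero.mpr hp]

lemma IsProper.notMem_support_dropLast {vin vout : V} {ω : G.Walk vin vout} (hω : IsProper ω)
    (hne : vin ≠ vout) : vout ∉ ω.dropLast.support := by
  have h := congrArg (List.count vout)
    (Walk.support_dropLast_concat (Walk.not_nil_of_ne (p := ω) hne))
  rw [List.count_append, show ω.support.count vout = 1 from hω] at h
  exact List.count_eq_zero.mp (by simpa using h)

end Trace

section EdgeVectors

variable {V : Type*} [DecidableEq V] {G : SimpleGraph V} {D : Submodule ℝ (V → ℝ)} {vout : V}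

lemma trace_sub_mem_of_notMem_support
    (hD : ∀ ⦃x y⦄, G.Adj x y → x ≠ vout → y ≠ vout → Pi.single x 1 + Pi.single y 1 ∈ D)
    {u v : V} (p : G.Walk u v) (hp : vout ∉ p.support) :
    trace p - (if Even p.length then Pi.single u 1 else 0) ∈ D := by
  induction p with
  | nil => simp [trace_nil]
  | @cons u m v h q ih =>
    rw [Walk.support_cons, List.mem_cons, not_or] at hp
    have hedge := hD h (Ne.symm hp.1) (fun hm => hp.2 (hm ▸ q.start_mem_support))
    rw [trace_cons, Walk.length_cons]
    by_cases hq : Even q.length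
    · simpa [hq, Nat.even_add_one, add_sub_assoc] using D.add_mem hedge (ih hp.2)
    · simpa [hq, Nat.even_add_one] using ih hp.2

lemma single_mem_of_notMem_support
    (hD : ∀ ⦃x y⦄, G.Adj x y → x ≠ vout → y ≠ vout → Pi.single x 1 + Pi.single y 1 ∈ D)
    {u v : V} (p : G.Walk u v) (hp : vout ∉ p.support) (hu : Pi.single u 1 ∈ D) :
    Pi.single v 1 ∈ D := by
  induction p with
  | nil => exact hu
  | @cons u m v h q ih =>
    rw [Walk.support_cons, List.mem_cons, not_or] at hp
    have hedge := hD h (Ne.symm hp.1) (fun hm => hp.2 (hm ▸ q.start_mem_support))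
    exact ih hp.2 (by simpa using D.sub_mem hedge hu)

lemma trace_sub_mem_of_isProper
    (hD : ∀ ⦃x y⦄, G.Adj x y → x ≠ vout → y ≠ vout → Pi.single x 1 + Pi.single y 1 ∈ D)
    {vin : V} (hne : vin ≠ vout) {ω : G.Walk vin vout} (hω : IsProper ω) :
    trace ω - Pi.single vout 1 - (if Odd ω.length then Pi.single vin 1 else 0) ∈ D := by
  have hnil := Walk.not_nil_of_ne (p := ω) hne
  have h := trace_sub_mem_of_notMem_support hD _ (hω.notMem_support_dropLast hne)
  have htrace : trace ω = trace ω.dropLast + Pi.single vout 1 := by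
    conv_lhs => rw [← Walk.concat_dropLast (Walk.adj_penultimate hnil)]
    exact trace_concat _ _
  have hodd : Odd ω.length ↔ Even ω.dropLast.length := by
    rw [← Walk.length_dropLast_add_one hnil, Nat.odd_add_one, Nat.not_odd_iff_even]
  simpa [htrace, hodd] using h

end EdgeVectors

section ProperWalks

variable {V : Type*} [DecidableEq V] {G : SimpleGraph V} {vin vout w : V}

lemma trace_sub_trace_mem_direction {ω ω' : G.Walk vin vout} (h : IsProper ω)
    (h' : IsProper ω') :
    trace ω - trace ω' ∈ (affineSpan ℝ (traceSet G vin vout)).direction :=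
  AffineSubspace.vsub_mem_direction (mem_affineSpan ℝ ⟨ω, h, rfl⟩)
    (mem_affineSpan ℝ ⟨ω', h', rfl⟩)

lemma direction_affineSpan_traceSet_le_ker :
    (affineSpan ℝ (traceSet G vin vout)).direction ≤ LinearMap.ker (LinearMap.proj vout) := by
  rw [direction_affineSpan, vectorSpan_def, Submodule.span_le]
  rintro _ ⟨_, ⟨ω, hω, rfl⟩, _, ⟨ω', hω', rfl⟩, rfl⟩
  simp [hω.trace_vout_eq_one, hω'.trace_vout_eq_one]

lemma single_add_single_mem_direction (hconn : (G.induce {x | x ≠ vout}).Preconnected)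
    (hw : G.Adj w vout) (hne : vin ≠ vout) {x y : V} (hxy : G.Adj x y) (hx : x ≠ vout)
    (hy : y ≠ vout) :
    Pi.single x 1 + Pi.single y 1 ∈ (affineSpan ℝ (traceSet G vin vout)).direction := by
  obtain ⟨p, hp⟩ := hconn.exists_walk_notMem_support hne hx
  obtain ⟨q, hq⟩ := hconn.exists_walk_notMem_support hx hw.ne
  have hω : IsProper (q.concat hw) := isProper_concat hq hw
  have hω' : IsProper (Walk.cons hxy (Walk.cons hxy.symm (q.concat hw))) := by
    rwa [isProper_cons_iff hx, isProper_cons_iff hy]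
  have h := trace_sub_trace_mem_direction ((isProper_append_iff hp _).mpr hω')
    ((isProper_append_iff hp _).mpr hω)
  rwa [trace_append_cons_cons, add_assoc, add_sub_cancel_left] at h

lemma colorable_two_of_isProper_length_even_iff
    (hconn : (G.induce {x | x ≠ vout}).Preconnected) (hw : G.Adj w vout) (hne : vin ≠ vout)
    (hpar : ∀ ω₁ ω₂ : G.Walk vin vout, IsProper ω₁ → IsProper ω₂ →
      (Even ω₁.length ↔ Even ω₂.length)) :
    G.Colorable 2 := by
  choose W hW using fun z (hz : z ≠ vout) => hconn.exists_walk_notMem_support hne hz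
  set ω₀ := (W w hw.ne).concat hw
  have hω₀ : IsProper ω₀ := isProper_concat (hW _ _) hw
  have hout : ∀ a (ha : a ≠ vout), G.Adj a vout →
      (Even (W a ha).length ↔ ¬Even ω₀.length) := fun a ha h => by
    have := hpar _ _ (isProper_concat (hW a ha) h) hω₀
    rw [Walk.length_concat, Nat.even_add_one] at this
    tauto
  -- an edge `ab` of `G - vout` closes the cycle `W a, ab, (W b)⁻¹` at `vin`
  have hinner : ∀ a b (ha : a ≠ vout) (hb : b ≠ vout), G.Adj a b →
      (Even (W a ha).length ↔ ¬Even (W b hb).length) := fun a b ha hb h => by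
    have hC : vout ∉ ((W a ha).append (Walk.cons h (W b hb).reverse)).support := by
      simp [Walk.support_append, Walk.support_reverse, hW]
    have := hpar _ _ ((isProper_append_iff hC ω₀).mpr hω₀) hω₀
    simp only [Walk.length_append, Walk.length_cons, Walk.length_reverse, Nat.even_add,
      Nat.even_add_one] at this
    tauto
  let c : G.Coloring Bool := Coloring.mk
    (fun z => if hz : z = vout then decide (Even ω₀.length) else decide (Even (W z hz).length))
    (fun {a b} hab => by
      by_cases ha : a = vout <;> by_cases hb : b = vout
      · exact absurd (ha.trans hb.symm) hab.ne
      · subst ha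
        simp only [dite_true, hb, dite_false, ne_eq, decide_eq_decide, hout b hb hab.symm]
        tauto
      · subst hb
        simp only [dite_true, ha, dite_false, ne_eq, decide_eq_decide, hout a ha hab]
        tauto
      · simp only [ha, hb, dite_false, ne_eq, decide_eq_decide, hinner a b ha hb hab]
        tauto)
  simpa using c.colorable

lemma exists_isProper_even_odd (hconn : (G.induce {x | x ≠ vout}).Preconnected)
    (hw : G.Adj w vout) (hne : vin ≠ vout) (hnbip : ¬G.Colorable 2) :
    ∃ ω₁ ω₂ : G.Walk vin vout, IsProper ω₁ ∧ IsProper ω₂ ∧ Even ω₁.length ∧ Odd ω₂.length := by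
  by_contra! h
  refine hnbip (colorable_two_of_isProper_length_even_iff hconn hw hne fun ω₁ ω₂ h₁ h₂ => ?_)
  have h₁₂ := h ω₁ ω₂ h₁ h₂
  have h₂₁ := h ω₂ ω₁ h₂ h₁
  simp only [Nat.not_odd_iff_even] at h₁₂ h₂₁
  tauto

lemma single_mem_direction (hconn : (G.induce {x | x ≠ vout}).Preconnected)
    (hw : G.Adj w vout) (hne : vin ≠ vout) (hnbip : ¬G.Colorable 2) {z : V} (hz : z ≠ vout) :
    Pi.single z 1 ∈ (affineSpan ℝ (traceSet G vin vout)).direction := by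
  set D := (affineSpan ℝ (traceSet G vin vout)).direction
  have hD : ∀ ⦃x y⦄, G.Adj x y → x ≠ vout → y ≠ vout → Pi.single x 1 + Pi.single y 1 ∈ D :=
    fun _ _ hxy hx hy => single_add_single_mem_direction hconn hw hne hxy hx hy
  obtain ⟨ω₁, ω₂, h₁, h₂, heven, hodd⟩ := exists_isProper_even_odd hconn hw hne hnbip
  have hvin : Pi.single vin 1 ∈ D := by
    have t₁ := trace_sub_mem_of_isProper hD hne h₁
    have t₂ := trace_sub_mem_of_isProper hD hne h₂
    rw [if_neg (Nat.not_odd_iff_even.mpr heven), sub_zero] at t₁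
    rw [if_pos hodd] at t₂
    convert D.sub_mem (D.sub_mem (trace_sub_trace_mem_direction h₂ h₁) t₂) (D.neg_mem t₁)
      using 1
    abel
  obtain ⟨p, hp⟩ := hconn.exists_walk_notMem_support hne hz
  exact single_mem_of_notMem_support hD p hp hvin

end ProperWalks

/-- If `G` is connected, `G - vout` is connected and `G` is not bipartite, then the affine
span of the traces of proper walks has dimension `n - 1`. -/
theorem affineSpan_traces_dim_not_bipartite (n : ℕ) {V : Type*} [Fintype V] [DecidableEq V]
    (hcard : Fintype.card V = n) (G : SimpleGraph V) (hG : G.Connected)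
    (vin vout : V) (hne : vin ≠ vout)
    (hconn : (G.induce {x | x ≠ vout}).Connected)
    (hnbip : ¬ G.Colorable 2) :
    Module.finrank ℝ (affineSpan ℝ (traceSet G vin vout)).direction = n - 1 := by
  subst hcard
  have : Nontrivial V := nontrivial_of_ne vin vout hne
  obtain ⟨w, hw⟩ := hG.preconnected.exists_adj_of_nontrivial vout
  have hdir : (affineSpan ℝ (traceSet G vin vout)).direction =
      LinearMap.ker (LinearMap.proj vout) :=
    le_antisymm direction_affineSpan_traceSet_le_ker (LinearMap.ker_proj_le_of_single_mem
      fun _ hz => single_mem_direction hconn.preconnected hw.symm hne hnbip hz)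
  rw [hdir, LinearMap.finrank_ker_proj]

end
end

section
/- Let G be a finite connected simple graph on vertex set V with distinguished vertices v_in ≠ v_out such that G − v_out is connected, and let β : V → ℝ_{>0} be a positive weight function. Then there is at most one nonnegative vector r ∈ ℝ^V with r(v_out) = 1 and ‖r‖₁ > 1 satisfying M_β r = r. -/
/-! Writing `d = r - r'`, the fixed-point equations give `M_β d = d` with `d(v_out) = 0`. After the
substitution `z = d / (β · deg_β)`, where `deg_β v = ∑_{u ∼ v} β u`, the rows `v ≠ v_out` say that
`z v` is the `β`-weighted mean of `z` over the neighbours of `v`. Since `z` vanishes at `v_out`,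
which has a neighbour, and `G − v_out` is connected, the maximum principle forces `z = 0`. -/

open scoped Classical

noncomputable section

lemma SimpleGraph.Preconnected.induction_of_adj {V : Type*} {G : SimpleGraph V}
    (hG : G.Preconnected) {p : V → Prop} (hp : ∀ x y, G.Adj x y → p x → p y)
    {a : V} (ha : p a) (b : V) : p b := by
  obtain ⟨w⟩ := hG a b
  induction w with
  | nil => exact ha
  | cons hadj _ ih => exact ih (hp _ _ hadj ha)

namespace SimpleGraph

variable {V : Type*} [Fintype V] (G : SimpleGraph V) {β : V → ℝ}

def weightedDegree (β : V → ℝ) (v : V) : ℝ :=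
  ∑ u with G.Adj v u, β u

lemma weightedDegree_pos [Nontrivial V] (hG : G.Preconnected) (hβ : ∀ v, 0 < β v) (v : V) :
    0 < G.weightedDegree β v := by
  obtain ⟨u, hvu⟩ := hG.exists_adj_of_nontrivial v
  exact Finset.sum_pos' (fun w _ => (hβ w).le) ⟨u, by simpa using hvu, hβ u⟩

lemma apply_eq_of_weighted_mean_of_isMax (hβ : ∀ v, 0 < β v) {z : V → ℝ} {x : V}
    (hmean : G.weightedDegree β x * z x = ∑ u with G.Adj x u, β u * z u)
    (hmax : ∀ y, z y ≤ z x) {u : V} (hxu : G.Adj x u) : z u = z x := by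
  have hsum : ∑ u with G.Adj x u, β u * (z x - z u) = 0 := by
    simp only [mul_sub, Finset.sum_sub_distrib, ← Finset.sum_mul]
    exact sub_eq_zero.2 hmean
  have hterm := (Finset.sum_eq_zero_iff_of_nonneg fun y _ =>
    mul_nonneg (hβ y).le (sub_nonneg.2 (hmax y))).1 hsum u (by simpa using hxu)
  linarith [(mul_eq_zero.1 hterm).resolve_left (hβ u).ne']

lemma nonpos_of_weighted_mean {s : V} (hconn : (G.induce {x | x ≠ s}).Connected)
    (hs : ∃ u, G.Adj u s) (hβ : ∀ v, 0 < β v) {z : V → ℝ} (hzs : z s = 0)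
    (hmean : ∀ v ≠ s, G.weightedDegree β v * z v = ∑ u with G.Adj v u, β u * z u)
    (v : V) : z v ≤ 0 := by
  have : Nonempty V := ⟨s⟩
  obtain ⟨x, hmax⟩ := Finite.exists_max z
  refine (hmax v).trans (not_lt.1 fun hpos => ?_)
  have hxs : x ≠ s := by rintro rfl; linarith
  have hconst : ∀ y : {x | x ≠ s}, z y = z x := by
    refine hconn.preconnected.induction_of_adj (p := fun y => z y = z x) ?_ (a := ⟨x, hxs⟩) rfl
    rintro ⟨a, ha⟩ ⟨b, _⟩ hab (hza : z a = z x)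
    rw [← hza]
    exact G.apply_eq_of_weighted_mean_of_isMax hβ (hmean a ha) (hza ▸ hmax) (induce_adj.1 hab)
  obtain ⟨u, hus⟩ := hs
  have hzu := hconst ⟨u, hus.ne⟩
  have := G.apply_eq_of_weighted_mean_of_isMax hβ (hmean u hus.ne) (hzu ▸ hmax) hus
  linarith

lemma eq_zero_of_weighted_mean {s : V} (hconn : (G.induce {x | x ≠ s}).Connected)
    (hs : ∃ u, G.Adj u s) (hβ : ∀ v, 0 < β v) {z : V → ℝ} (hzs : z s = 0)
    (hmean : ∀ v ≠ s, G.weightedDegree β v * z v = ∑ u with G.Adj v u, β u * z u) :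
    z = 0 := by
  funext v
  refine le_antisymm (G.nonpos_of_weighted_mean hconn hs hβ hzs hmean v) ?_
  refine neg_nonpos.1 (G.nonpos_of_weighted_mean hconn hs hβ (z := -z) (by simp [hzs]) ?_ v)
  intro w hw
  simp [hmean w hw, Finset.sum_neg_distrib]

lemma weighted_mean_of_eq_mul_sum_div (hβ : ∀ v, 0 < β v)
    (hdeg : ∀ v, 0 < G.weightedDegree β v) {d : V → ℝ} {v : V}
    (hd : d v = β v * ∑ w with G.Adj v w, d w / G.weightedDegree β w) :
    G.weightedDegree β v * (d v / (β v * G.weightedDegree β v)) =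
      ∑ w with G.Adj v w, β w * (d w / (β w * G.weightedDegree β w)) := by
  have hterm (w : V) :
      β w * (d w / (β w * G.weightedDegree β w)) = d w / G.weightedDegree β w := by
    have hβw := (hβ w).ne'
    field_simp
  have hβv := (hβ v).ne'
  have hdegv := (hdeg v).ne'
  simp only [hterm]
  field_simp
  rw [hd]

end SimpleGraph

lemma mulVec_Mmat_apply_of_apply_eq_zero {V : Type*} [Fintype V] [DecidableEq V]
    (G : SimpleGraph V) (vin vout : V) (β x : V → ℝ) (hx : x vout = 0) {v : V} (hv : v ≠ vout) :
    (Mmat G vin vout β).mulVec x v = β v * ∑ w with G.Adj v w, x w / G.weightedDegree β w := by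
  rw [Finset.mul_sum, Finset.sum_filter, Matrix.mulVec, dotProduct]
  refine Finset.sum_congr rfl fun w _ => ?_
  by_cases hw : w = vout
  · simp [hw, hx]
  · by_cases hvw : G.Adj v w
    · simp [Mmat, hw, hv, hvw, SimpleGraph.weightedDegree, G.adj_comm w]
      ring
    · simp [Mmat, hw, hvw]

theorem fixed_point_unique_general {V : Type*} [Fintype V] [DecidableEq V]
    (G : SimpleGraph V) (hG : G.Connected) (vin vout : V)
    (hconn : (G.induce {x | x ≠ vout}).Connected)
    (β : V → ℝ) (hβ : ∀ v, 0 < β v)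
    (r r' : V → ℝ)
    (hr1 : r vout = 1) (hr1' : r' vout = 1)
    (hfix : (Mmat G vin vout β).mulVec r = r)
    (hfix' : (Mmat G vin vout β).mulVec r' = r') :
    r = r' := by
  obtain ⟨x, hx⟩ := hconn.nonempty
  have : Nontrivial V := ⟨x, vout, hx⟩
  obtain ⟨u, hu⟩ := hG.preconnected.exists_adj_of_nontrivial vout
  have hdeg := G.weightedDegree_pos hG.preconnected hβ
  set d := r - r'
  have hd : d vout = 0 := by simp [d, hr1, hr1']
  have hfixd : ∀ v ≠ vout, d v = β v * ∑ w with G.Adj v w, d w / G.weightedDegree β w :=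
    fun v hv => by
      rw [← mulVec_Mmat_apply_of_apply_eq_zero G vin vout β d hd hv, Matrix.mulVec_sub, hfix,
        hfix']
  have hz := G.eq_zero_of_weighted_mean hconn ⟨u, hu.symm⟩ hβ
    (z := fun v => d v / (β v * G.weightedDegree β v)) (by simp [hd])
    fun v hv => G.weighted_mean_of_eq_mul_sum_div hβ hdeg (hfixd v hv)
  funext v
  have hdv : d v / (β v * G.weightedDegree β v) = 0 := congrFun hz v
  rw [div_eq_zero_iff, or_iff_left (mul_pos (hβ v) (hdeg v)).ne'] at hdv
  exact sub_eq_zero.1 hdv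

/-- Uniqueness: there is at most one nonnegative vector `r` with `r(vout) = 1`,
`‖r‖₁ > 1` and `M_β r = r`. -/
theorem fixed_point_unique {V : Type*} [Fintype V] [DecidableEq V]
    (G : SimpleGraph V) (hG : G.Connected) (vin vout : V) (hne : vin ≠ vout)
    (hconn : (G.induce {x | x ≠ vout}).Connected)
    (β : V → ℝ) (hβ : ∀ v, 0 < β v)
    (r r' : V → ℝ) (hr : ∀ v, 0 ≤ r v) (hr' : ∀ v, 0 ≤ r' v)
    (hr1 : r vout = 1) (hr1' : r' vout = 1)
    (hnorm : 1 < ∑ v, |r v|) (hnorm' : 1 < ∑ v, |r' v|)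
    (hfix : (Mmat G vin vout β).mulVec r = r)
    (hfix' : (Mmat G vin vout β).mulVec r' = r') :
    r = r' :=
  fixed_point_unique_general G hG vin vout hconn β hβ r r' hr1 hr1' hfix hfix'

end
end

section
/- Let G be a finite connected simple graph with distinguished vertices v_in ≠ v_out such that G − v_out is connected, let v ∈ V with v ≠ v_out, and let G′ be the graph obtained from G by attaching a new vertex v′ of degree 1 adjacent only to v. Let α ∈ ℝ, let r : V → ℝ, and define r′ : V(G′) → ℝ by r′(w) = r(w) for w ∈ V and r′(v′) = α. If r′ ∈ Ψ(G′), then r − α·e_v ∈ Ψ(G). -/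
/-!
Deleting every excursion `v → v' → v` from a walk in `G'` leaves a walk in `G`; on traces this is
the linear map `foldPendant v : f ↦ f ∘ some - f(v') • e_v`, and conversely every walk in `G` is a
walk in `G'` avoiding `v'`. Hence `foldPendant v` maps the traces of proper walks of `G'` onto
those of `G` (properness is kept because `v ≠ v_out`), and so maps the convex hull onto the convex
hull. A linear map between finite-dimensional spaces restricts to an open surjection between the
affine spans of a set and of its image, so it carries relative interior into relative interior;
and `foldPendant v r' = r - α • e_v`.
-/

open scoped Classical

noncomputable section

/-- The graph obtained from `G` by attaching a new pendant vertex (represented by `none`)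
of degree 1, adjacent only to `v`. -/
def attachPendant {V : Type*} (G : SimpleGraph V) (v : V) : SimpleGraph (Option V) :=
  SimpleGraph.fromRel (fun a b =>
    (∃ x y, a = some x ∧ b = some y ∧ G.Adj x y) ∨ (a = none ∧ b = some v))

theorem AffineMap.image_intrinsicInterior_subset
    {E F P Q : Type*} [NormedAddCommGroup E] [NormedSpace ℝ E] [FiniteDimensional ℝ E]
    [MetricSpace P] [NormedAddTorsor E P]
    [NormedAddCommGroup F] [NormedSpace ℝ F] [FiniteDimensional ℝ F]
    [MetricSpace Q] [NormedAddTorsor F Q]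
    (f : P →ᵃ[ℝ] Q) (s : Set P) :
    f '' intrinsicInterior ℝ s ⊆ intrinsicInterior ℝ (f '' s) := by
  rcases s.eq_empty_or_nonempty with rfl | hs
  · simp
  have : Nonempty s := hs.to_subtype
  have : Nonempty (f '' s) := (hs.image f).to_subtype
  have hmap : (affineSpan ℝ s).map f = affineSpan ℝ (f '' s) := AffineSubspace.map_span f s
  set φ := f.restrict hmap.le
  have hφ : IsOpenMap φ :=
    AffineMap.isOpenMap_linear_iff.mp <| φ.linear.isOpenMap_of_finiteDimensional <|
      φ.linear_surjective_iff.mpr (AffineMap.restrict.surjective f hmap)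
  rintro _ ⟨_, ⟨y, hy, rfl⟩, rfl⟩
  refine ⟨φ y, interior_mono ?_ (hφ.image_interior_subset _ ⟨y, hy, rfl⟩), rfl⟩
  rintro _ ⟨z, hz, rfl⟩
  exact ⟨z, hz, rfl⟩

section AttachPendant

variable {V : Type*} {G : SimpleGraph V} {v : V}

lemma attachPendant_adj_some_some {a b : V} :
    (attachPendant G v).Adj (some a) (some b) ↔ G.Adj a b := by
  simp only [attachPendant, SimpleGraph.fromRel_adj, Option.some.injEq, reduceCtorEq,
    false_and, or_false, exists_and_left, exists_eq_left', ne_eq]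
  exact ⟨fun ⟨_, h⟩ => h.elim id G.adj_symm, fun h => ⟨h.ne, Or.inl h⟩⟩

lemma attachPendant_adj_some_none {a : V} : (attachPendant G v).Adj (some a) none ↔ a = v := by
  simp [attachPendant, eq_comm]

lemma attachPendant_adj_none_some {a : V} : (attachPendant G v).Adj none (some a) ↔ a = v := by
  rw [SimpleGraph.adj_comm, attachPendant_adj_some_none]

variable (G v) in
def toAttachPendant : G →g attachPendant G v where
  toFun := some
  map_rel' := attachPendant_adj_some_some.mpr

end AttachPendant

section Map

variable {V W : Type*} [DecidableEq W] {G : SimpleGraph V} {G' : SimpleGraph W} {f : G →g G'}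
  {a b : V} {ω : G.Walk a b}

lemma trace_map_apply_of_notMem_range {y : W} (hy : y ∉ Set.range f) :
    trace (ω.map f) y = 0 := by
  rw [trace, SimpleGraph.Walk.support_map, List.count_eq_zero.mpr (by grind)]
  simp

variable [DecidableEq V]

lemma trace_map_apply (hf : Function.Injective f) (x : V) :
    trace (ω.map f) (f x) = trace ω x := by
  simp [trace, SimpleGraph.Walk.support_map, List.count_map_of_injective _ _ hf]

lemma IsProper.map (hf : Function.Injective f) (h : IsProper ω) : IsProper (ω.map f) := by
  simpa [IsProper, SimpleGraph.Walk.support_map, List.count_map_of_injective _ _ hf] using h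

end Map

section FoldPendant

variable {V : Type*} [DecidableEq V] {G : SimpleGraph V} {v : V}

def foldPendant (v : V) : (Option V → ℝ) →ₗ[ℝ] V → ℝ :=
  LinearMap.funLeft ℝ ℝ some - (LinearMap.proj none).smulRight (Pi.single v 1)

lemma foldPendant_apply (f : Option V → ℝ) (x : V) :
    foldPendant v f x = f (some x) - if x = v then f none else 0 := by
  simp [foldPendant, Pi.single_apply]

lemma foldPendant_trace_map_toAttachPendant {a b : V} (ω : G.Walk a b) :
    foldPendant v (trace (ω.map (toAttachPendant G v))) = trace ω := by
  funext x
  have hsome : trace (ω.map (toAttachPendant G v)) (some x) = trace ω x :=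
    trace_map_apply (Option.some_injective V) x
  have hnone : trace (ω.map (toAttachPendant G v)) none = 0 :=
    trace_map_apply_of_notMem_range fun ⟨_, h⟩ => Option.some_ne_none _ h
  simp [foldPendant_apply, hsome, hnone]

/- Every visit of `p` to the pendant vertex `none` is an excursion `v → none → v`, except for a
visit at an end of `p`; deleting the excursions gives `ω`, and the unmatched end visits are the
correction on the right. -/
lemma exists_walk_trace_add_eq_of_attachPendant {u w : Option V}
    (p : (attachPendant G v).Walk u w) :
    ∃ ω : G.Walk (u.getD v) (w.getD v), ∀ x, trace ω x + (if x = v then trace p none else 0) =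
      trace p (some x) + if x = v then (if u = none then 1 else 0) + (if w = none then 1 else 0)
        else 0 := by
  induction p with
  | @nil u =>
    refine ⟨.nil, fun x => ?_⟩
    rcases u with _ | a <;> rcases eq_or_ne x v with rfl | hx <;>
      simp [trace, List.count_singleton, Ne.symm, *]
  | @cons u u' w h q ih =>
    obtain ⟨ω, hω⟩ := ih
    rcases u with _ | a <;> rcases u' with _ | c
    · exact absurd h (SimpleGraph.irrefl _)
    · obtain rfl : v = c := (attachPendant_adj_none_some.mp h).symm
      refine ⟨ω, fun x => ?_⟩
      have := hω x
      rcases eq_or_ne x v with rfl | hx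
      · simp_all [trace]
        linarith
      · simp_all [trace, Ne.symm]
    · obtain rfl : v = a := (attachPendant_adj_some_none.mp h).symm
      refine ⟨ω, fun x => ?_⟩
      have := hω x
      rcases eq_or_ne x v with rfl | hx
      · simp_all [trace]
        linarith
      · simp_all [trace, Ne.symm]
    · refine ⟨.cons (attachPendant_adj_some_some.mp h) ω, fun x => ?_⟩
      have := hω x
      rcases eq_or_ne x v with rfl | hx
      · simp_all [trace, List.count_cons]
        linarith
      · simp_all [trace, List.count_cons, Ne.symm]

lemma exists_walk_trace_eq_foldPendant {a b : V}
    (p : (attachPendant G v).Walk (some a) (some b)) :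
    ∃ ω : G.Walk a b, trace ω = foldPendant v (trace p) := by
  obtain ⟨ω, hω⟩ := exists_walk_trace_add_eq_of_attachPendant p
  refine ⟨ω, funext fun x => ?_⟩
  rw [foldPendant_apply, eq_sub_iff_add_eq, hω]
  simp

lemma traceSet_eq_image_foldPendant {vin vout : V} (hv : v ≠ vout) :
    traceSet G vin vout =
      foldPendant v '' traceSet (attachPendant G v) (some vin) (some vout) := by
  ext f
  constructor
  · rintro ⟨ω, hω, rfl⟩
    exact ⟨_, ⟨_, hω.map (Option.some_injective V), rfl⟩,
      foldPendant_trace_map_toAttachPendant ω⟩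
  · rintro ⟨_, ⟨p, hp, rfl⟩, rfl⟩
    obtain ⟨ω, hω⟩ := exists_walk_trace_eq_foldPendant p
    refine ⟨ω, ?_, hω.symm⟩
    have hvout := congrFun hω vout
    rw [foldPendant_apply, if_neg hv.symm] at hvout
    simp_all [IsProper, trace]

end FoldPendant

theorem mem_Psi_of_attachPendant_general {V : Type*} [Fintype V] [DecidableEq V]
    (G : SimpleGraph V) (vin vout : V)
    (v : V) (hv : v ≠ vout) (α : ℝ) (r : V → ℝ)
    (h : (fun o => o.elim α r) ∈ Psi (attachPendant G v) (some vin) (some vout)) :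
    (r - α • (Pi.single v 1 : V → ℝ)) ∈ Psi G vin vout := by
  have hfold : foldPendant v (fun o => o.elim α r) = r - α • Pi.single v 1 := by
    funext x
    by_cases hx : x = v <;> simp [foldPendant_apply, hx]
  rw [Psi, traceSet_eq_image_foldPendant hv, ← LinearMap.image_convexHull, ← hfold]
  exact (foldPendant v).toAffineMap.image_intrinsicInterior_subset _ ⟨_, h, rfl⟩

/-- If `r'` (extending `r` by `r'(v') = α`) lies in `Ψ(G')`, where `G'` is obtained from `G`
by attaching a pendant vertex `v'` to `v`, then `r - α·e_v` lies in `Ψ(G)`. -/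
theorem mem_Psi_of_attachPendant {V : Type*} [Fintype V] [DecidableEq V]
    (G : SimpleGraph V) (hG : G.Connected) (vin vout : V) (hne : vin ≠ vout)
    (hconn : (G.induce {x | x ≠ vout}).Connected)
    (v : V) (hv : v ≠ vout) (α : ℝ) (r : V → ℝ)
    (h : (fun o => o.elim α r) ∈ Psi (attachPendant G v) (some vin) (some vout)) :
    (r - α • (Pi.single v 1 : V → ℝ)) ∈ Psi G vin vout :=
  mem_Psi_of_attachPendant_general G vin vout v hv α r h

end
end

section
/- Let G be a finite connected simple graph with distinguished vertices v_in ≠ v_out such that G − v_out is connected, and suppose G has two vertices v, w ∉ {v_in, v_out} with identical neighborhoods N(v) = N(w). Suppose that the equation τ_ρ = r′ is solvable on G′ := G − w for every r′ ∈ Ψ(G′). Then for every r ∈ Ψ(G), the equation τ_ρ = r is solvable on G. -/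
open scoped Classical

noncomputable section

/-!
Merging the twin `w` into `v` is a graph map `c : G → G - w` along which `G` is the pullback of
`G - w`. Pushing vertex functions forward along `c` (summing over fibres) is linear and maps the
traces of proper walks of `G` onto those of `G - w`, hence maps `Ψ(G)` into `Ψ(G - w)`; so the
pushforward of `r` is solvable on `G - w`, with weights `β'`. These lift to `G` by splitting
`β'(v)` between `v` and `w` in the ratio `r v : r w`, which is possible because every point of
`Ψ(G)` is positive: every vertex lies on some proper walk.
-/

section IntrinsicInterior

variable {E F : Type*} [NormedAddCommGroup E] [NormedSpace ℝ E]
  [NormedAddCommGroup F] [NormedSpace ℝ F]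

theorem mem_intrinsicInterior_iff_dist {s : Set E} {x : E} :
    x ∈ intrinsicInterior ℝ s ↔
      x ∈ affineSpan ℝ s ∧ ∃ ε > 0, ∀ y ∈ affineSpan ℝ s, dist y x < ε → y ∈ s := by
  constructor
  · rintro ⟨⟨x, hx⟩, hmem, rfl⟩
    obtain ⟨ε, hε, hball⟩ := Metric.mem_nhds_iff.1 (mem_interior_iff_mem_nhds.1 hmem)
    exact ⟨hx, ε, hε, fun y hy hyx => @hball ⟨y, hy⟩ hyx⟩
  · rintro ⟨hx, ε, hε, hball⟩
    refine ⟨⟨x, hx⟩, mem_interior_iff_mem_nhds.2 (Metric.mem_nhds_iff.2 ⟨ε, hε, ?_⟩), rfl⟩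
    exact fun y hy => hball y y.2 hy

theorem exists_add_smul_sub_mem_of_mem_intrinsicInterior {s : Set E} {x y : E}
    (hx : x ∈ intrinsicInterior ℝ s) (hy : y ∈ s) : ∃ t : ℝ, 0 < t ∧ x + t • (x - y) ∈ s := by
  obtain ⟨hxA, ε, hε, hball⟩ := mem_intrinsicInterior_iff_dist.1 hx
  set t := ε / (2 * (‖x - y‖ + 1))
  have ht : 0 < t := by positivity
  refine ⟨t, ht, hball _ ?_ ?_⟩
  · have hdir : t • (x - y) ∈ (affineSpan ℝ s).direction :=
      Submodule.smul_mem _ t (AffineSubspace.vsub_mem_direction hxA (subset_affineSpan ℝ s hy))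
    simpa [vadd_eq_add, add_comm] using AffineSubspace.vadd_mem_of_mem_direction hdir hxA
  · rw [dist_eq_norm, add_sub_cancel_left, norm_smul, Real.norm_of_nonneg ht.le]
    calc t * ‖x - y‖ ≤ t * (‖x - y‖ + 1) := by gcongr; linarith
      _ = ε / 2 := by unfold t; field_simp
      _ < ε := half_lt_self hε

theorem pos_of_mem_intrinsicInterior {s : Set E} {φ : E →ₗ[ℝ] ℝ} (hs : ∀ z ∈ s, 0 ≤ φ z)
    {x y : E} (hx : x ∈ intrinsicInterior ℝ s) (hy : y ∈ s) (hφy : 0 < φ y) : 0 < φ x := by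
  obtain ⟨t, ht, hxt⟩ := exists_add_smul_sub_mem_of_mem_intrinsicInterior hx hy
  have h₁ := hs x (intrinsicInterior_subset hx)
  have h₂ := hs _ hxt
  rw [map_add, map_smul, map_sub, smul_eq_mul] at h₂
  nlinarith

theorem LinearMap.image_intrinsicInterior_subset [FiniteDimensional ℝ E]
    (L : E →ₗ[ℝ] F) (s : Set E) : L '' intrinsicInterior ℝ s ⊆ intrinsicInterior ℝ (L '' s) := by
  rintro _ ⟨x, hx, rfl⟩
  obtain ⟨hxA, ε, hε, hball⟩ := mem_intrinsicInterior_iff_dist.1 hx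
  set A := affineSpan ℝ s
  have hspan : affineSpan ℝ (L '' s) = A.map L.toAffineMap := by
    rw [AffineSubspace.map_span, LinearMap.coe_toAffineMap]
  -- a continuous linear section of `L` over the direction of `A` lifts small moves in the image
  obtain ⟨σ, hσ⟩ := LinearMap.exists_rightInverse_of_surjective (L.submoduleMap A.direction)
    (LinearMap.range_eq_top.2 (LinearMap.submoduleMap_surjective L A.direction))
  obtain ⟨δ, hδ, hσδ⟩ := Metric.continuousAt_iff.1
    (σ.continuous_of_finiteDimensional.continuousAt (x := 0)) ε hε
  rw [mem_intrinsicInterior_iff_dist, hspan]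
  refine ⟨⟨x, hxA, rfl⟩, δ, hδ, ?_⟩
  rintro _ ⟨z, hzA, rfl⟩ hzx
  have hu : L z - L x ∈ A.direction.map L :=
    ⟨z - x, AffineSubspace.vsub_mem_direction hzA hxA, by simp⟩
  set d := σ ⟨L z - L x, hu⟩
  have hLd : L d = L z - L x := congrArg Subtype.val (LinearMap.congr_fun hσ ⟨_, hu⟩)
  refine ⟨x + d, hball _ ?_ ?_, ?_⟩
  · simpa [vadd_eq_add, add_comm] using AffineSubspace.vadd_mem_of_mem_direction d.2 hxA
  · have := hσδ (x := ⟨L z - L x, hu⟩) (by simpa [dist_eq_norm] using hzx)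
    simpa [dist_eq_norm] using this
  · simp [hLd]

end IntrinsicInterior

section Pushforward

variable {V V' V'' : Type*} [Fintype V] [DecidableEq V']

def pushforward (c : V → V') : (V → ℝ) →ₗ[ℝ] V' → ℝ where
  toFun f x' := ∑ x with c x = x', f x
  map_add' f g := by ext; simp [Finset.sum_add_distrib]
  map_smul' a f := by ext; simp [Finset.mul_sum]

theorem pushforward_apply (c : V → V') (f : V → ℝ) (x' : V') :
    pushforward c f x' = ∑ x with c x = x', f x := rfl

theorem pushforward_apply_of_fiber_eq {c : V → V'} {a : V} (ha : ∀ x, c x = c a → x = a)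
    (f : V → ℝ) : pushforward c f (c a) = f a := by
  rw [pushforward_apply, Finset.sum_eq_single_of_mem a (by simp)]
  intro x hx hxa
  exact absurd (ha x (Finset.mem_filter.1 hx).2) hxa

theorem pushforward_id [DecidableEq V] (f : V → ℝ) : pushforward id f = f := by
  ext x
  exact pushforward_apply_of_fiber_eq (c := id) (fun _ => id) f

theorem pushforward_pushforward [Fintype V'] [DecidableEq V''] (c : V → V') (d : V' → V'')
    (f : V → ℝ) :
    pushforward d (pushforward c f) = pushforward (d ∘ c) f := by
  ext x''
  simp only [pushforward_apply, Function.comp_apply]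
  rw [← Finset.sum_fiberwise_of_maps_to (s := Finset.univ.filter fun x => d (c x) = x'')
    (t := Finset.univ.filter fun x' => d x' = x'') (g := c) (by simp)]
  refine Finset.sum_congr rfl fun x' hx' => Finset.sum_congr ?_ fun _ _ => rfl
  ext x
  simp only [Finset.mem_filter, Finset.mem_univ, true_and] at hx' ⊢
  constructor
  · rintro rfl; exact ⟨hx', rfl⟩
  · exact fun h => h.2

theorem sum_comp_mul_eq_sum_mul_pushforward [Fintype V'] (c : V → V') (g : V' → ℝ) (f : V → ℝ) :
    ∑ x, g (c x) * f x = ∑ x', g x' * pushforward c f x' := by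
  rw [← Finset.sum_fiberwise Finset.univ c]
  refine Finset.sum_congr rfl fun x' _ => ?_
  rw [pushforward_apply, Finset.mul_sum]
  exact Finset.sum_congr rfl fun x hx => by rw [(Finset.mem_filter.1 hx).2]

theorem pushforward_pos {c : V → V'} (hc : Function.Surjective c) {f : V → ℝ}
    (hf : ∀ x, 0 < f x) (x' : V') : 0 < pushforward c f x' := by
  obtain ⟨x, rfl⟩ := hc x'
  exact Finset.sum_pos (fun y _ => hf y) ⟨x, by simp⟩

end Pushforward

theorem List.count_map_eq_sum_fiber {α β : Type*} [Fintype α] [DecidableEq α] [DecidableEq β]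
    (f : α → β) (l : List α) (b : β) :
    (l.map f).count b = ∑ a with f a = b, l.count a := by
  induction l with
  | nil => simp
  | cons a l ih =>
    simp only [List.map_cons, List.count_cons, ih, Finset.sum_add_distrib, beq_iff_eq]
    congr 1
    rw [Finset.sum_ite_eq]
    simp [eq_comm]

section Traces

variable {V V' : Type*} [DecidableEq V] [DecidableEq V']
  {G : SimpleGraph V} {G' : SimpleGraph V'}

theorem isProper_iff_trace {vin vout : V} (ω : G.Walk vin vout) :
    IsProper ω ↔ trace ω vout = 1 := by
  simp [IsProper, trace]

variable [Fintype V]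

theorem trace_map (f : G →g G') {u v : V} (ω : G.Walk u v) :
    trace (ω.map f) = pushforward f (trace ω) := by
  ext x'
  simp [trace, pushforward_apply, SimpleGraph.Walk.support_map, List.count_map_eq_sum_fiber]

theorem image_traceSet_subset [Fintype V'] (f : G →g G') {vin vout : V} {vin' vout' : V'}
    (hin : f vin = vin') (hout : f vout = vout') (hfout : ∀ x, f x = vout' → x = vout) :
    pushforward f '' traceSet G vin vout ⊆ traceSet G' vin' vout' := by
  subst hin hout
  rintro _ ⟨_, ⟨ω, hω, rfl⟩, rfl⟩
  have htrace : trace ((ω.map f).copy rfl rfl) = pushforward f (trace ω) := trace_map f ω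
  refine ⟨(ω.map f).copy rfl rfl, ?_, htrace.symm⟩
  rw [isProper_iff_trace, htrace, pushforward_apply_of_fiber_eq hfout]
  exact (isProper_iff_trace ω).1 hω

theorem image_traceSet_eq_of_retraction [Fintype V'] (f : G →g G') (i : G' →g G)
    (hfi : ∀ x', f (i x') = x') {vin vout : V} {vin' vout' : V'} (hin : f vin = vin')
    (hout : f vout = vout') (hfout : ∀ x, f x = vout' → x = vout) (hiin : i vin' = vin)
    (hiout : i vout' = vout) (hiout' : ∀ x', i x' = vout → x' = vout') :
    pushforward f '' traceSet G vin vout = traceSet G' vin' vout' := by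
  refine (image_traceSet_subset f hin hout hfout).antisymm fun t' ht' => ?_
  refine ⟨pushforward i t', image_traceSet_subset i hiin hiout hiout' ⟨t', ht', rfl⟩, ?_⟩
  have hfi' : (f ∘ i : V' → V') = id := funext hfi
  rw [pushforward_pushforward, hfi']
  exact pushforward_id t'

end Traces

section ProperWalks

variable {V : Type*} [DecidableEq V] {G : SimpleGraph V} {vin vout : V}

theorem exists_isProper_mem_support (hG : G.Connected) (hne : vin ≠ vout)
    (hconn : (G.induce {x | x ≠ vout}).Connected) (x : V) :
    ∃ ω : G.Walk vin vout, IsProper ω ∧ x ∈ ω.support := by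
  suffices h : ∀ y, y ≠ vout → ∃ ω : G.Walk vin vout, IsProper ω ∧ y ∈ ω.support by
    by_cases hx : x = vout
    · obtain ⟨ω, hω, -⟩ := h vin hne
      exact ⟨ω, hω, hx ▸ ω.end_mem_support⟩
    · exact h x hx
  intro y hy
  obtain ⟨p⟩ := hconn.preconnected ⟨vin, hne⟩ ⟨y, hy⟩
  obtain ⟨q⟩ := hG.preconnected y vout
  -- first reach `y` avoiding `vout`, then stop at the first visit of `vout`
  let P : G.Walk vin y := p.map (SimpleGraph.Embedding.induce _).toHom
  let Q : G.Walk y vout := q.takeUntil vout q.end_mem_support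
  have hP : vout ∉ P.support := fun h => by
    obtain ⟨a, -, ha⟩ := List.mem_map.1 ((SimpleGraph.Walk.support_map _ p) ▸ h)
    exact a.2 ha
  have hQ : Q.support.tail.count vout = 1 := by
    have h := q.count_support_takeUntil_eq_one q.end_mem_support
    rwa [← SimpleGraph.Walk.cons_tail_support, List.count_cons, beq_false_of_ne hy,
      if_neg Bool.false_ne_true, add_zero] at h
  refine ⟨P.append Q, ?_, (P.mem_support_append_iff Q).2 (.inl P.end_mem_support)⟩
  rw [IsProper, SimpleGraph.Walk.support_append, List.count_append, List.count_eq_zero.2 hP, hQ]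

theorem pos_of_mem_Psi [Fintype V] (hG : G.Connected) (hne : vin ≠ vout)
    (hconn : (G.induce {x | x ≠ vout}).Connected) {r : V → ℝ} (hr : r ∈ Psi G vin vout)
    (x : V) : 0 < r x := by
  obtain ⟨ω, hω, hx⟩ := exists_isProper_mem_support hG hne hconn x
  have hnonneg : ∀ f ∈ convexHull ℝ (traceSet G vin vout), 0 ≤ LinearMap.proj (R := ℝ) x f :=
    fun f hf => convexHull_min (𝕜 := ℝ) (t := {f : V → ℝ | 0 ≤ LinearMap.proj (R := ℝ) x f})
      (by rintro _ ⟨ω, -, rfl⟩; simp [trace])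
      (convex_halfSpace_ge (𝕜 := ℝ) (LinearMap.proj x).isLinear 0) hf
  refine pos_of_mem_intrinsicInterior hnonneg hr (subset_convexHull ℝ _ ⟨ω, hω, rfl⟩) ?_
  simpa [trace, List.count_pos_iff] using hx

end ProperWalks

section Rows

variable {V : Type*} [Fintype V] [DecidableEq V]

def neighborWeight (G : SimpleGraph V) (β : V → ℝ) (y : V) : ℝ :=
  ∑ u with G.Adj u y, β u

def outflow (G : SimpleGraph V) (vout : V) (β r : V → ℝ) (x : V) : ℝ :=
  ∑ y with G.Adj x y ∧ y ≠ vout, r y / neighborWeight G β y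

variable (G : SimpleGraph V) (vin vout : V) (β r : V → ℝ)

theorem Mmat_mulVec_apply_vout : (Mmat G vin vout β).mulVec r vout = r vout := by
  rw [Matrix.mulVec, dotProduct, Finset.sum_eq_single vout]
  · simp [Mmat]
  · intro y _ hy
    simp [Mmat, hy]
  · simp

theorem Mmat_mulVec_apply_of_ne {x : V} (hx : x ≠ vout) :
    (Mmat G vin vout β).mulVec r x =
      (if x = vin then r vout else 0) + β x * outflow G vout β r x := by
  have hentry : ∀ y, Mmat G vin vout β x y * r y
      = (if y = vout then (if x = vin then r vout else 0) else 0)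
        + (if G.Adj x y ∧ y ≠ vout then β x * (r y / neighborWeight G β y) else 0) := by
    intro y
    unfold Mmat neighborWeight
    split_ifs <;> first | (exfalso; tauto) | simp_all [div_mul_eq_mul_div, mul_div_assoc]
  rw [Matrix.mulVec, dotProduct, Finset.sum_congr rfl fun y _ => hentry y,
    Finset.sum_add_distrib, outflow, Finset.mul_sum, Finset.sum_filter]
  simp

end Rows

section Blowup

variable {V V' : Type*} [Fintype V] [Fintype V'] [DecidableEq V']
  {G : SimpleGraph V} {G' : SimpleGraph V'} {c : V → V'}

theorem neighborWeight_eq_pushforward (hc : ∀ a b, G.Adj a b ↔ G'.Adj (c a) (c b))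
    (β : V → ℝ) (y : V) : neighborWeight G β y = neighborWeight G' (pushforward c β) (c y) := by
  convert sum_comp_mul_eq_sum_mul_pushforward c
    (fun u' => if G'.Adj u' (c y) then (1 : ℝ) else 0) β using 1 <;>
    simp [neighborWeight, Finset.sum_filter, hc _ y]

variable [DecidableEq V]

theorem outflow_eq_pushforward (hc : ∀ a b, G.Adj a b ↔ G'.Adj (c a) (c b)) {vout : V}
    {vout' : V'} (hout : c vout = vout') (hfout : ∀ x, c x = vout' → x = vout)
    (β r : V → ℝ) (x : V) :
    outflow G vout β r x = outflow G' vout' (pushforward c β) (pushforward c r) (c x) := by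
  have hne : ∀ y, y ≠ vout ↔ c y ≠ vout' := fun y =>
    ⟨fun hy h => hy (hfout y h), fun h hy => h (hy ▸ hout)⟩
  simp only [outflow, Finset.sum_filter, hc x, hne, neighborWeight_eq_pushforward hc β]
  simp only [div_eq_inv_mul, ← ite_zero_mul]
  exact sum_comp_mul_eq_sum_mul_pushforward c
    (fun y' => if G'.Adj (c x) y' ∧ y' ≠ vout' then (neighborWeight G' (pushforward c β) y')⁻¹
      else 0) r

/-- The lifted weight splits the weight of each vertex of `G'` over its fibre in proportion
to `r`. -/
theorem solvable_of_solvable_pushforward (hc : ∀ a b, G.Adj a b ↔ G'.Adj (c a) (c b))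
    (hsurj : Function.Surjective c) {vin vout : V} {vin' vout' : V'}
    (hin : c vin = vin') (hout : c vout = vout')
    (hfin : ∀ x, c x = vin' → x = vin) (hfout : ∀ x, c x = vout' → x = vout)
    {r : V → ℝ} (hr : ∀ x, 0 < r x) (hsolv : Solvable G' vin' vout' (pushforward c r)) :
    Solvable G vin vout r := by
  obtain ⟨β', hβ', hfix, hone⟩ := hsolv
  have hr' : ∀ x', 0 < pushforward c r x' := pushforward_pos hsurj hr
  have hr'in : pushforward c r vin' = r vin := hin ▸ pushforward_apply_of_fiber_eq (hin ▸ hfin) r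
  have hr'out : pushforward c r vout' = r vout :=
    hout ▸ pushforward_apply_of_fiber_eq (hout ▸ hfout) r
  set β : V → ℝ := fun x => β' (c x) * r x / pushforward c r (c x) with hβdef
  have hβ : pushforward c β = β' := by
    ext x'
    have hfiber :
        ∑ x with c x = x', β x = β' x' / pushforward c r x' * ∑ x with c x = x', r x := by
      rw [Finset.mul_sum]
      refine Finset.sum_congr rfl fun x hx => ?_
      simp only [hβdef, (Finset.mem_filter.1 hx).2]
      ring
    rw [pushforward_apply, hfiber, ← pushforward_apply, div_mul_cancel₀ _ (hr' x').ne']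
  refine ⟨β, fun x => by positivity [hβ' (c x), hr x, hr' (c x)], ?_, hr'out ▸ hone⟩
  ext x
  by_cases hxout : x = vout
  · rw [hxout]
    exact Mmat_mulVec_apply_vout G vin vout β r
  set F := outflow G' vout' β' (pushforward c r) (c x)
  have hrow := congrFun hfix (c x)
  rw [Mmat_mulVec_apply_of_ne _ _ _ _ _ fun h => hxout (hfout x h)] at hrow
  rw [Mmat_mulVec_apply_of_ne _ _ _ _ _ hxout, outflow_eq_pushforward hc hout hfout, hβ]
  have hβF : β x * F = r x / pushforward c r (c x) * (β' (c x) * F) := by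
    rw [hβdef]; ring
  by_cases hxin : x = vin
  · have hcx : c x = vin' := hxin ▸ hin
    have hrx : pushforward c r (c x) = r x := by rw [hcx, hr'in, hxin]
    rw [if_pos hcx, hr'out, hrx] at hrow
    rw [if_pos hxin, hβF, hrx, div_self (hr x).ne', one_mul, hrow]
  · rw [if_neg (fun h => hxin (hfin x h)), zero_add] at hrow
    rw [if_neg hxin, zero_add, hβF, hrow, div_mul_cancel₀ _ (hr' (c x)).ne']

end Blowup

section Twins

variable {V : Type*} [DecidableEq V] {v w : V}

def collapse (hvw : v ≠ w) (x : V) : ↥{x : V | x ≠ w} :=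
  if h : x = w then ⟨v, hvw⟩ else ⟨x, h⟩

theorem collapse_of_ne (hvw : v ≠ w) {x : V} (hx : x ≠ w) : collapse hvw x = ⟨x, hx⟩ :=
  dif_neg hx

theorem collapse_val (hvw : v ≠ w) (x : ↥{x : V | x ≠ w}) : collapse hvw x.1 = x :=
  collapse_of_ne hvw x.2

theorem eq_of_collapse_eq (hvw : v ≠ w) {x y : V} (hy : y ≠ w) (hyv : y ≠ v)
    (h : collapse hvw x = ⟨y, hy⟩) : x = y := by
  unfold collapse at h
  split_ifs at h with hx
  · exact absurd (congrArg Subtype.val h) hyv.symm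
  · exact congrArg Subtype.val h

theorem adj_iff_adj_collapse {G : SimpleGraph V} (hvw : v ≠ w) (hN : ∀ x, G.Adj v x ↔ G.Adj w x)
    (a b : V) : G.Adj a b ↔ (G.induce {x | x ≠ w}).Adj (collapse hvw a) (collapse hvw b) := by
  rw [SimpleGraph.induce_adj]
  unfold collapse
  split_ifs with ha hb hb <;> subst_vars
  · simp
  · exact (hN b).symm
  · rw [G.adj_comm, ← hN, G.adj_comm]
  · rfl

end Twins

/-- If `v, w ∉ {vin, vout}` have identical neighborhoods, and `τ_ρ = r'` is solvable on
`G' = G - w` for every `r' ∈ Ψ(G')`, then `τ_ρ = r` is solvable on `G` for every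
`r ∈ Ψ(G)`. -/
theorem solvable_of_twin_vertices {V : Type*} [Fintype V] [DecidableEq V]
    (G : SimpleGraph V) (hG : G.Connected) (vin vout : V) (hne : vin ≠ vout)
    (hconn : (G.induce {x | x ≠ vout}).Connected)
    (v w : V) (hvw : v ≠ w)
    (hvin : v ≠ vin) (hvout : v ≠ vout) (hwin : w ≠ vin) (hwout : w ≠ vout)
    (hN : ∀ x, G.Adj v x ↔ G.Adj w x)
    (hsolv' : ∀ r' ∈ Psi (G.induce {x | x ≠ w}) ⟨vin, hwin.symm⟩ ⟨vout, hwout.symm⟩,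
      Solvable (G.induce {x | x ≠ w}) ⟨vin, hwin.symm⟩ ⟨vout, hwout.symm⟩ r')
    (r : V → ℝ) (hr : r ∈ Psi G vin vout) :
    Solvable G vin vout r := by
  have hc := adj_iff_adj_collapse hvw hN
  have hin := collapse_of_ne hvw hwin.symm
  have hout := collapse_of_ne hvw hwout.symm
  have hfin := fun x => eq_of_collapse_eq hvw (x := x) hwin.symm hvin.symm
  have hfout := fun x => eq_of_collapse_eq hvw (x := x) hwout.symm hvout.symm
  have htraces := image_traceSet_eq_of_retraction ⟨collapse hvw, (hc _ _).1⟩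
    (SimpleGraph.Embedding.induce _).toHom (collapse_val hvw) hin hout hfout rfl rfl
    (fun _ h => Subtype.ext h)
  have hr' : pushforward (collapse hvw) r ∈
      Psi (G.induce {x | x ≠ w}) ⟨vin, hwin.symm⟩ ⟨vout, hwout.symm⟩ := by
    rw [Psi, ← htraces, ← LinearMap.image_convexHull]
    exact LinearMap.image_intrinsicInterior_subset _ _ ⟨r, hr, rfl⟩
  exact solvable_of_solvable_pushforward hc (fun x => ⟨x.1, collapse_val hvw x⟩) hin hout
    hfin hfout (pos_of_mem_Psi hG hne hconn hr) (hsolv' _ hr')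

end
end

section
/- Let G be the path graph on vertices v_1, v_2, …, v_n (n ≥ 2, with v_j adjacent to v_{j+1} for 1 ≤ j ≤ n−1), with v_out = v_1 and v_in = v_n. Then for every proper walk ω from v_in to v_out, there exist nonnegative integers α_2, …, α_{n−1} such that tr_ω = 𝟙 + Σ_{j=2}^{n−1} α_j f_j, where f_j = e_j + e_{j+1} and 𝟙 is the all-ones vector in ℝ^n. -/
open scoped Classical

noncomputable section

/-- `f_j = e_j + e_{j+1}` (1-based indexing of the vertices of the path `v_1, …, v_n`,
so vertex `v_j` is index `j - 1` in `Fin n`). -/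
def pathF (n : ℕ) (j : ℕ) : Fin n → ℝ :=
  fun i => (if (i : ℕ) + 1 = j then 1 else 0) + (if (i : ℕ) + 1 = j + 1 then 1 else 0)

namespace SimpleGraph.pathGraph

variable {n : ℕ}

/-- Steps up are indexed by their upper endpoint, so that `upSteps ω j` is the coefficient
of `pathF n j`. -/
def upSteps {a b : Fin n} (ω : (pathGraph n).Walk a b) (j : ℕ) : ℕ :=
  ω.darts.countP fun d => (d.fst : ℕ) + 1 = j ∧ (d.snd : ℕ) = j

lemma upSteps_cons {a b c : Fin n} (h : (pathGraph n).Adj a b) (p : (pathGraph n).Walk b c)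
    (j : ℕ) :
    upSteps (.cons h p) j = upSteps p j + if (a : ℕ) + 1 = j ∧ (b : ℕ) = j then 1 else 0 := by
  simp [upSteps, List.countP_cons]

lemma upSteps_eq_zero_of_le {a b : Fin n} (ω : (pathGraph n).Walk a b) {j : ℕ} (hj : n ≤ j) :
    upSteps ω j = 0 :=
  List.countP_eq_zero.mpr fun d _ h => by have := d.snd.isLt; simp at h; omega

lemma upSteps_zero {a b : Fin n} (ω : (pathGraph n).Walk a b) : upSteps ω 0 = 0 :=
  List.countP_eq_zero.mpr fun _ _ h => by simp at h

/-- A visit to `x` is the start (if `x = a`) or an arrival by a step; a walk ending at `0`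
crosses the edge `{x, x + 1}` downwards as often as upwards, plus once more if `x < a`. -/
theorem count_support_eq {a b : Fin n} (ω : (pathGraph n).Walk a b) (hb : (b : ℕ) = 0)
    (x : Fin n) :
    ω.support.count x = (if (x : ℕ) ≤ a then 1 else 0) + upSteps ω x + upSteps ω (x + 1) := by
  induction ω with
  | nil =>
    simp only [Walk.support_nil, List.count_singleton, upSteps, Walk.darts_nil,
      List.countP_nil, beq_iff_eq, Fin.ext_iff]
    split_ifs <;> omega
  | cons h p ih =>
    rw [Walk.support_cons, List.count_cons, ih hb, upSteps_cons, upSteps_cons]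
    simp only [beq_iff_eq, Fin.ext_iff]
    rcases pathGraph_adj.mp h with h | h <;> split_ifs <;> omega

end SimpleGraph.pathGraph

lemma sum_smul_pathF_apply {n : ℕ} {c : ℕ → ℝ} (hc : ∀ j ∉ Finset.Icc 2 (n - 1), c j = 0)
    (i : Fin n) :
    (∑ j ∈ Finset.Icc 2 (n - 1), c j • pathF n j) i = c i + c (i + 1) := by
  simp only [Finset.sum_apply, Pi.smul_apply, pathF, smul_eq_mul, mul_add, mul_ite, mul_one,
    mul_zero, Nat.add_right_cancel_iff, Finset.sum_add_distrib, Finset.sum_ite_eq]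
  rw [add_comm]
  congr 1 <;> split_ifs with h <;> first | rfl | exact (hc _ h).symm

open SimpleGraph.pathGraph

/-- For the path graph on `v_1, …, v_n` with `vout = v_1`, `vin = v_n`, the trace of any
proper walk is of the form `𝟙 + Σ_{j=2}^{n-1} α_j f_j` with nonnegative integers `α_j`. -/
theorem trace_pathGraph_eq (n : ℕ) (hn : 2 ≤ n)
    (ω : (SimpleGraph.pathGraph n).Walk ⟨n - 1, by omega⟩ ⟨0, by omega⟩)
    (hω : IsProper ω) :
    ∃ α : ℕ → ℕ, trace ω =
      (fun _ => 1) + ∑ j ∈ Finset.Icc 2 (n - 1), (α j : ℝ) • pathF n j := by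
  have hω1 : upSteps ω 1 = 0 := by
    have h0 := count_support_eq ω rfl ⟨0, by omega⟩
    simp only [IsProper] at hω
    simp only [hω, zero_le, if_true, zero_add, upSteps_zero] at h0
    omega
  refine ⟨upSteps ω, funext fun x => ?_⟩
  have hα : ∀ j ∉ Finset.Icc 2 (n - 1), (upSteps ω j : ℝ) = 0 := by
    intro j hj
    obtain hj | hj : j ≤ 1 ∨ n ≤ j := by simp only [Finset.mem_Icc] at hj; omega
    · interval_cases j <;> simp [upSteps_zero, hω1]
    · simp [upSteps_eq_zero_of_le ω hj]
  rw [Pi.add_apply, sum_smul_pathF_apply hα, trace, count_support_eq ω rfl,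
    if_pos (by simp; omega)]
  push_cast
  ring

end
end

section
/- Let G be a finite connected simple graph with distinguished vertices v_in ≠ v_out. Then for every proper walk ω from v_in to v_out and every vertex v ≠ v_out, the trace satisfies tr_ω(v) ≤ [v = v_in] + Σ_{w ∼ v, w ≠ v_out} tr_ω(w), where [v = v_in] equals 1 if v = v_in and 0 otherwise, and the sum is over neighbors w of v other than v_out. -/
open scoped Classical

noncomputable section

/-!
Every visit to `v` other than the initial one is entered along a dart from a neighbour of `v`.
The tails of these darts are distinct positions of the walk before its final vertex, and a
proper walk does not visit `vout` at any such position.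
-/

namespace SimpleGraph.Walk

variable {V : Type*} [DecidableEq V] {G : SimpleGraph V}

theorem count_support_eq_ite_add_countP_darts {u w : V} (p : G.Walk u w) (v : V) :
    p.support.count v = (if v = u then 1 else 0) + p.darts.countP (·.snd = v) := by
  rw [← p.cons_tail_support, List.count_cons, ← map_snd_darts, List.count, List.countP_map,
    add_comm]
  congr 1
  simp only [beq_iff_eq, @eq_comm _ v u]

theorem countP_snd_darts_le_sum_count_dropLast {u w : V} (p : G.Walk u w) (v : V)
    (s : Finset V) (hs : ∀ x ∈ p.support.dropLast, G.Adj v x → x ∈ s) :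
    p.darts.countP (·.snd = v) ≤ ∑ x ∈ s, p.support.dropLast.count x := by
  set preds := (p.darts.filter (·.snd = v)).map (·.fst)
  have hsub : preds.Sublist p.support.dropLast :=
    p.map_fst_darts ▸ (List.filter_sublist).map _
  have hmem : ∀ x ∈ (preds : Multiset V), x ∈ s := by
    intro x hx
    obtain ⟨d, hd, rfl⟩ := List.mem_map.mp (Multiset.mem_coe.mp hx)
    have hsnd := (List.mem_filter.mp hd).2
    exact hs _ (hsub.subset (List.mem_map_of_mem hd))
      ((of_decide_eq_true hsnd) ▸ d.adj.symm)
  calc p.darts.countP (·.snd = v) = preds.length := by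
        rw [List.length_map, List.countP_eq_length_filter]
    _ = ∑ x ∈ s, preds.count x := by
        simpa using (Multiset.sum_count_eq_card hmem).symm
    _ ≤ ∑ x ∈ s, p.support.dropLast.count x :=
        Finset.sum_le_sum fun x _ => hsub.count_le x

theorem count_support_end {u w : V} (p : G.Walk u w) :
    p.support.count w = p.support.dropLast.count w + 1 := by
  conv_lhs => rw [← p.dropLast_support_concat]
  rw [List.count_append, List.count_singleton_self]

end SimpleGraph.Walk

theorem IsProper.notMem_dropLast_support {V : Type*} [DecidableEq V] {G : SimpleGraph V}
    {vin vout : V} {ω : G.Walk vin vout} (hω : IsProper ω) : vout ∉ ω.support.dropLast := by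
  have := ω.count_support_end
  rw [IsProper] at hω
  exact List.count_eq_zero.mp (by omega)

theorem trace_le_sum_neighbors_general {V : Type*} [Fintype V] [DecidableEq V]
    (G : SimpleGraph V) (vin vout : V)
    (ω : G.Walk vin vout) (hω : IsProper ω) (v : V) :
    trace ω v ≤ (if v = vin then 1 else 0) +
      ∑ w ∈ Finset.univ.filter (fun w => G.Adj v w ∧ w ≠ vout), trace ω w := by
  have key : ω.support.count v ≤ (if v = vin then 1 else 0) +
      ∑ w ∈ Finset.univ.filter (fun w => G.Adj v w ∧ w ≠ vout), ω.support.count w :=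
    calc ω.support.count v = (if v = vin then 1 else 0) + ω.darts.countP (·.snd = v) :=
          ω.count_support_eq_ite_add_countP_darts v
      _ ≤ (if v = vin then 1 else 0) +
            ∑ w ∈ Finset.univ.filter (fun w => G.Adj v w ∧ w ≠ vout),
              ω.support.dropLast.count w := by
          gcongr
          refine ω.countP_snd_darts_le_sum_count_dropLast v _ fun x hx hadj => ?_
          simpa [hadj] using ne_of_mem_of_not_mem hx hω.notMem_dropLast_support
      _ ≤ _ := by
          gcongr with w
          exact (List.dropLast_sublist _).count_le w
  unfold trace
  split_ifs at key ⊢ <;> exact_mod_cast key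

/-- For every proper walk `ω` and vertex `v ≠ vout`, the number of visits to `v` is at most
`[v = vin]` plus the total number of visits to the neighbors of `v` other than `vout`. -/
theorem trace_le_sum_neighbors {V : Type*} [Fintype V] [DecidableEq V]
    (G : SimpleGraph V) (hG : G.Connected) (vin vout : V) (hne : vin ≠ vout)
    (ω : G.Walk vin vout) (hω : IsProper ω) (v : V) (hv : v ≠ vout) :
    trace ω v ≤ (if v = vin then 1 else 0) +
      ∑ w ∈ Finset.univ.filter (fun w => G.Adj v w ∧ w ≠ vout), trace ω w :=
  trace_le_sum_neighbors_general G vin vout ω hω v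

end
end

section
/- Let G = K_n be the complete graph on vertices v_1, v_2, …, v_n (n ≥ 3), with v_out = v_1 and v_in = v_2. If r ∈ ℝ^n lies in the convex hull of { tr_ω : ω a proper walk from v_2 to v_1 }, then r_2 ≤ 1 + Σ_{j=3}^n r_j, and for every index i with 3 ≤ i ≤ n, r_i ≤ Σ_{j ∉ {1, i}} r_j. -/
open scoped Classical

noncomputable section

/-!
Consecutive vertices of a walk are distinct, so the visits of a walk to a vertex `x` other than
its endpoint are separated by visits elsewhere: `tr x ≤ Σ_{y ≠ x} tr y`, with one to spare when
the walk does not start at `x` either. For a proper walk `tr v_out = 1`, which turns these counts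
into the two inequalities; both are linear, so they pass to the convex hull.
-/

namespace SimpleGraph.Walk

variable {V : Type*} [DecidableEq V] {G : SimpleGraph V} {u v x : V}

theorem two_mul_count_support_add_le (p : G.Walk u v) (hv : v ≠ x) :
    2 * p.support.count x + (if u = x then 0 else 1) ≤ p.support.length := by
  induction p with
  | nil => simp [hv]
  | @cons u w v h q ih =>
    rw [support_cons, List.count_cons, List.length_cons]
    have hq := ih hv
    by_cases hu : u = x
    · subst hu
      simp only [h.ne', if_false] at hq
      simp only [beq_self_eq_true, if_true]
      omega
    · simp only [hu, if_false, beq_iff_eq]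
      split_ifs at hq <;> omega

theorem two_mul_count_support_le (p : G.Walk u v) (hv : v ≠ x) :
    2 * p.support.count x ≤ p.support.length :=
  le_self_add.trans (p.two_mul_count_support_add_le hv)

theorem two_mul_count_support_lt (p : G.Walk u v) (hu : u ≠ x) (hv : v ≠ x) :
    2 * p.support.count x < p.support.length := by
  simpa [hu] using p.two_mul_count_support_add_le hv

end SimpleGraph.Walk

section Trace

variable {V : Type*} [DecidableEq V] {G : SimpleGraph V}

@[simp]
theorem trace_apply {u v : V} (ω : G.Walk u v) (x : V) : trace ω x = ω.support.count x := rfl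

variable {vin vout : V} {ω : G.Walk vin vout}

theorem IsProper.trace_end (hω : IsProper ω) : trace ω vout = 1 := by
  rw [trace_apply]
  exact_mod_cast hω

variable [Fintype V]

theorem sum_trace {u v : V} (ω : G.Walk u v) : ∑ x, trace ω x = ω.support.length := by
  have hcount : ∑ x, ω.support.count x = ω.support.length := by
    rw [← List.sum_toFinset_count_eq_length]
    exact (Finset.sum_subset (Finset.subset_univ _)
      fun x _ hx => List.count_eq_zero.mpr (by simpa using hx)).symm
  simp only [trace_apply]
  exact_mod_cast hcount

theorem sum_univ_eq_add_add_sum_sdiff_pair {M : Type*} [AddCommMonoid M] {f : V → M} {a b : V} (hab : a ≠ b) :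
    ∑ x, f x = f a + f b + ∑ x ∈ Finset.univ \ {a, b}, f x := by
  rw [← Finset.sum_pair hab, add_comm, Finset.sum_sdiff (Finset.subset_univ _)]

theorem IsProper.trace_start_le (hω : IsProper ω) (h : vin ≠ vout) :
    trace ω vin ≤ 1 + ∑ x ∈ Finset.univ \ {vout, vin}, trace ω x := by
  have hcount : 2 * trace ω vin ≤ ∑ x, trace ω x := by
    rw [sum_trace, trace_apply]
    exact_mod_cast ω.two_mul_count_support_le h.symm
  rw [sum_univ_eq_add_add_sum_sdiff_pair h.symm, hω.trace_end] at hcount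
  linarith

theorem IsProper.trace_le (hω : IsProper ω) {x : V} (hin : vin ≠ x) (hout : vout ≠ x) :
    trace ω x ≤ ∑ y ∈ Finset.univ \ {vout, x}, trace ω y := by
  have hcount : 2 * trace ω x + 1 ≤ ∑ y, trace ω y := by
    rw [sum_trace, trace_apply]
    exact_mod_cast ω.two_mul_count_support_lt hin hout
  rw [sum_univ_eq_add_add_sum_sdiff_pair hout, hω.trace_end] at hcount
  linarith

end Trace

theorem apply_le_add_sum_of_mem_convexHull {ι : Type*} {A : Set (ι → ℝ)} {x : ι}
    {s : Finset ι} {c : ℝ} (hA : ∀ f ∈ A, f x ≤ c + ∑ j ∈ s, f j) {r : ι → ℝ}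
    (hr : r ∈ convexHull ℝ A) : r x ≤ c + ∑ j ∈ s, r j := by
  have hlin : IsLinearMap ℝ fun f : ι → ℝ => f x - ∑ j ∈ s, f j :=
    ⟨fun f g => by simp only [Pi.add_apply, Finset.sum_add_distrib]; ring,
      fun a f => by simp only [Pi.smul_apply, smul_eq_mul, ← Finset.mul_sum]; ring⟩
  have hconv : Convex ℝ {f : ι → ℝ | f x ≤ c + ∑ j ∈ s, f j} := by
    simpa only [sub_le_iff_le_add] using convex_halfSpace_le hlin c
  exact convexHull_min hA hconv hr

/-- For the complete graph `K_n` with `vout = v_1`, `vin = v_2`: if `r` lies in the convex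
hull of the traces of proper walks then `r_2 ≤ 1 + Σ_{j ≥ 3} r_j` and, for each `i ≥ 3`,
`r_i ≤ Σ_{j ∉ {1, i}} r_j`. -/
theorem convexHull_traces_ineq (n : ℕ) (hn : 3 ≤ n) (r : Fin n → ℝ)
    (hr : r ∈ convexHull ℝ
      (traceSet (⊤ : SimpleGraph (Fin n)) ⟨1, by omega⟩ ⟨0, by omega⟩)) :
    (r ⟨1, by omega⟩ ≤ 1 + ∑ j ∈ Finset.univ \ {⟨0, by omega⟩, ⟨1, by omega⟩}, r j) ∧
      (∀ i : Fin n, 2 ≤ (i : ℕ) → r i ≤ ∑ j ∈ Finset.univ \ {⟨0, by omega⟩, i}, r j) := by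
  constructor
  · refine apply_le_add_sum_of_mem_convexHull ?_ hr
    rintro _ ⟨ω, hω, rfl⟩
    exact hω.trace_start_le (by simp [Fin.ext_iff])
  · intro i hi
    have hin : (⟨1, by omega⟩ : Fin n) ≠ i := Fin.ne_of_val_ne (by dsimp only; omega)
    have hout : (⟨0, by omega⟩ : Fin n) ≠ i := Fin.ne_of_val_ne (by dsimp only; omega)
    simpa only [zero_add] using apply_le_add_sum_of_mem_convexHull (c := 0)
      (by rintro _ ⟨ω, hω, rfl⟩; simpa only [zero_add] using hω.trace_le hin hout) hr

end
end
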